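/- arXiv:1806.11545 — 3 statements merged into one kernel-verified Lean document; each statement's English description precedes it below -/
import Mathlib

section
/- Let (a_R)_{R ≥ 0} be a positive real-valued function such that a_R → 0 as R → ∞, and suppose there exist constants c₁, c₂, R₀ > 0 such that for all R ≥ R₀: a_{2(R + R/log²(R))} ≤ c₁ a_R² + e^{−c₂ R}. Then there exist constants c₃, c₄ > 0 and a positive sequence (m_n)_{n ≥ 1} such that, for all n ≥ 1: 2ⁿ ≤ m_n ≤ c₃ 2ⁿ and a_{m_n} ≤ e^{−c₄ m_n}. -/
noncomputable def Rseq (S : ℝ) : ℕ → ℝ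
  | 0 => S
  | n+1 => 2 * (Rseq S n + Rseq S n / (Real.log (Rseq S n)) ^ 2)

lemma Rseq_lower (S : ℝ) (hS : 0 < S) : ∀ n, S * 2 ^ n ≤ Rseq S n := by
  intro n
  induction n with
  | zero => simp [Rseq]
  | succ n ih =>
    have h1 : 0 < Rseq S n := lt_of_lt_of_le (by positivity) ih
    have h2 : 0 ≤ Rseq S n / (Real.log (Rseq S n)) ^ 2 :=
      div_nonneg h1.le (sq_nonneg _)
    calc S * 2 ^ (n+1) = 2 * (S * 2 ^ n) := by ring
    _ ≤ 2 * (Rseq S n + Rseq S n / (Real.log (Rseq S n))^2) := by nlinarith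
    _ = Rseq S (n+1) := rfl

lemma Rseq_upper (S : ℝ) (hS : Real.exp 1 ≤ S) :
    ∀ n, Rseq S n ≤ S * 2 ^ n * Real.exp (4 - 4 / (n + 1)) := by
  have hS0 : 0 < S := lt_of_lt_of_le (Real.exp_pos 1) hS
  have hlogS : 1 ≤ Real.log S := by
    have := Real.log_le_log (Real.exp_pos 1) hS
    simpa using this
  intro n
  induction n with
  | zero =>
    simp [Rseq]
  | succ n ih =>
    have hc : ((n+1:ℕ):ℝ) + 1 = (n:ℝ) + 2 := by push_cast; ring
    rw [hc]
    have hR : S * 2 ^ n ≤ Rseq S n := Rseq_lower S hS0 n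
    have hRpos : 0 < Rseq S n := lt_of_lt_of_le (by positivity) hR
    have hlog2 : (0.6931471803 : ℝ) < Real.log 2 := Real.log_two_gt_d9
    have hL : ((n : ℝ) + 2) / 2 ≤ Real.log (Rseq S n) := by
      have h1 : Real.log (S * 2 ^ n) ≤ Real.log (Rseq S n) :=
        Real.log_le_log (by positivity) hR
      have h2 : Real.log (S * 2 ^ n) = Real.log S + n * Real.log 2 := by
        rw [Real.log_mul (ne_of_gt hS0) (by positivity), Real.log_pow]
      nlinarith [Nat.cast_nonneg (α := ℝ) n]
    have hLpos : 0 < Real.log (Rseq S n) := lt_of_lt_of_le (by positivity) hL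
    have hinv : 1 / (Real.log (Rseq S n)) ^ 2 ≤ 4 / ((n : ℝ) + 2) ^ 2 := by
      rw [div_le_div_iff₀ (by positivity) (by positivity)]
      have := mul_le_mul hL hL (by positivity) hLpos.le
      nlinarith
    have hfrac : 4 / ((n : ℝ) + 2) ^ 2 ≤ 4 / (((n:ℝ) + 1) * ((n:ℝ) + 2)) := by
      apply div_le_div_of_nonneg_left (by norm_num) (by positivity)
      nlinarith [Nat.cast_nonneg (α := ℝ) n]
    have hexp : 1 + 4 / (((n:ℝ) + 1) * ((n:ℝ) + 2)) ≤
        Real.exp (4 / ((n:ℝ)+1) - 4 / ((n:ℝ)+2)) := by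
      have h := Real.add_one_le_exp (4 / (((n:ℝ) + 1) * ((n:ℝ) + 2)))
      have heq : 4 / ((n:ℝ)+1) - 4 / ((n:ℝ)+2) = 4 / (((n:ℝ) + 1) * ((n:ℝ) + 2)) := by
        field_simp
        ring
      rw [heq]
      linarith
    have key : Rseq S (n+1) = 2 * Rseq S n * (1 + 1 / (Real.log (Rseq S n)) ^ 2) := by
      show 2 * (Rseq S n + Rseq S n / (Real.log (Rseq S n)) ^ 2) = _
      field_simp
    calc Rseq S (n+1) = 2 * Rseq S n * (1 + 1 / (Real.log (Rseq S n)) ^ 2) := key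
    _ ≤ 2 * Rseq S n * Real.exp (4 / ((n:ℝ)+1) - 4 / ((n:ℝ)+2)) := by
        apply mul_le_mul_of_nonneg_left _ (by positivity)
        linarith
    _ ≤ 2 * (S * 2 ^ n * Real.exp (4 - 4 / ((n:ℝ) + 1))) *
          Real.exp (4 / ((n:ℝ)+1) - 4 / ((n:ℝ)+2)) := by
        apply mul_le_mul_of_nonneg_right _ (Real.exp_pos _).le
        linarith
    _ = S * 2 ^ (n+1) * Real.exp ((4 - 4 / ((n:ℝ)+1)) + (4 / ((n:ℝ)+1) - 4/((n:ℝ)+2))) := by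
        rw [Real.exp_add]; ring
    _ = S * 2 ^ (n+1) * Real.exp (4 - 4 / ((n:ℝ) + 2)) := by
        ring_nf

set_option maxHeartbeats 1600000 in
/-- **Lemma 5.3.**
Let `(a_R)_{R ≥ 0}` be a positive real-valued function such that `a_R → 0` as `R → ∞`, and
suppose there exist constants `c₁, c₂, R₀ > 0` such that for all `R ≥ R₀`:
`a_{2(R + R/log²(R))} ≤ c₁ a_R² + e^{−c₂ R}`. Then there exist constants `c₃, c₄ > 0` and a
positive sequence `(m_n)_{n ≥ 1}` such that, for all `n ≥ 1`:
`2ⁿ ≤ m_n ≤ c₃ 2ⁿ` and `a_{m_n} ≤ e^{−c₄ m_n}`. -/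
theorem functional_inequality_exponential_decay
    (a : ℝ → ℝ) (hpos : ∀ R : ℝ, 0 ≤ R → 0 < a R)
    (hlim : Filter.Tendsto a Filter.atTop (nhds 0))
    (c₁ c₂ R₀ : ℝ) (hc₁ : 0 < c₁) (hc₂ : 0 < c₂) (hR₀ : 0 < R₀)
    (hrec : ∀ R : ℝ, R₀ ≤ R →
      a (2 * (R + R / (Real.log R) ^ 2)) ≤ c₁ * (a R) ^ 2 + Real.exp (-c₂ * R)) :
    ∃ c₃ > (0 : ℝ), ∃ c₄ > (0 : ℝ), ∃ m : ℕ → ℝ, ∀ n : ℕ, 1 ≤ n →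
      0 < m n ∧ (2 : ℝ) ^ n ≤ m n ∧ m n ≤ c₃ * 2 ^ n ∧
        a (m n) ≤ Real.exp (-c₄ * m n) := by
  set K : ℝ := max c₁ 1 with hK
  set M : ℝ := 2 * K with hMdef
  have hK1 : 1 ≤ K := le_max_right _ _
  have hKc : c₁ ≤ K := le_max_left _ _
  have hM2 : 2 ≤ M := by simp only [hMdef]; linarith
  have hM0 : 0 < M := by linarith
  have hsmall : ∀ᶠ R in Filter.atTop, a R < 1 / (2 * M) :=
    hlim.eventually_lt_const (by positivity)
  obtain ⟨T, hT⟩ := Filter.eventually_atTop.mp hsmall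
  set S : ℝ := max (max T R₀) (max (Real.exp 1) (2 * Real.log (2 * M) / c₂)) with hSdef
  have hSe : Real.exp 1 ≤ S := le_trans (le_max_left _ _) (le_max_right _ _)
  have hS1 : 1 ≤ S := le_trans (by nlinarith [Real.add_one_le_exp (1:ℝ)]) hSe
  have hS0 : 0 < S := by linarith
  have hSR₀ : R₀ ≤ S := le_trans (le_max_right _ _) (le_max_left _ _)
  have hST : T ≤ S := le_trans (le_max_left _ _) (le_max_left _ _)
  have hSc : 2 * Real.log (2 * M) ≤ c₂ * S := by
    have h : 2 * Real.log (2 * M) / c₂ ≤ S := le_trans (le_max_right _ _) (le_max_right _ _)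
    calc 2 * Real.log (2 * M) = (2 * Real.log (2 * M) / c₂) * c₂ := by field_simp
    _ ≤ S * c₂ := mul_le_mul_of_nonneg_right h hc₂.le
    _ = c₂ * S := mul_comm _ _
  have haS : a S < 1 / (2 * M) := hT S hST
  have haSpos : 0 < a S := hpos S hS0.le
  set c₄ : ℝ := min (c₂ * S / 4) (Real.log (1 / (M * a S))) with hc₄def
  have hMaS : M * a S < 1 / 2 := by
    have := mul_lt_mul_of_pos_left haS hM0
    rw [mul_one_div] at this
    calc M * a S < M / (2 * M) := this
    _ = 1 / 2 := by field_simp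
  have hMaSpos : 0 < M * a S := by positivity
  have hc₄pos : 0 < c₄ := by
    apply lt_min (by positivity)
    apply Real.log_pos
    rw [lt_div_iff₀ hMaSpos]
    linarith
  have hc₄a : c₄ ≤ c₂ * S / 4 := min_le_left _ _
  have hc₄b : c₄ ≤ Real.log (1 / (M * a S)) := min_le_right _ _
  clear_value K
  clear_value M
  clear_value S
  clear_value c₄
  have Rl : ∀ n, S * 2 ^ n ≤ Rseq S n := Rseq_lower S hS0
  have Ru : ∀ n, Rseq S n ≤ S * 2 ^ n * Real.exp (4 - 4 / (n + 1)) := Rseq_upper S hSe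
  have hRpos : ∀ n, 0 < Rseq S n := fun n => lt_of_lt_of_le (by positivity) (Rl n)
  have h2n : ∀ n : ℕ, (1:ℝ) ≤ 2 ^ n := fun n => one_le_pow₀ (by norm_num)
  have hRS : ∀ n, S ≤ Rseq S n := by
    intro n
    calc S = S * 1 := (mul_one S).symm
    _ ≤ S * 2 ^ n := by nlinarith [h2n n]
    _ ≤ Rseq S n := Rl n
  -- main decay induction
  have decay : ∀ n, a (Rseq S n) ≤ (1 / M) * Real.exp (-(c₄ * 2 ^ n)) := by
    intro n
    induction n with
    | zero =>
      have h1 : c₄ ≤ Real.log (1 / (M * a S)) := hc₄b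
      have h2 : Real.log (1 / (M * a S)) = -Real.log (M * a S) := Real.log_inv _ ▸ by
        rw [one_div, Real.log_inv]
      have h3 : Real.log (M * a S) ≤ -(c₄ * 2 ^ 0) := by
        simp only [pow_zero, mul_one]; linarith
      have h4 : M * a S ≤ Real.exp (-(c₄ * 2 ^ 0)) := by
        calc M * a S = Real.exp (Real.log (M * a S)) := (Real.exp_log hMaSpos).symm
        _ ≤ Real.exp (-(c₄ * 2 ^ 0)) := Real.exp_le_exp.mpr h3
      show a S ≤ (1 / M) * Real.exp (-(c₄ * 2 ^ 0))
      calc a S = (1 / M) * (M * a S) := by field_simp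
      _ ≤ (1 / M) * Real.exp (-(c₄ * 2 ^ 0)) :=
          mul_le_mul_of_nonneg_left h4 (by positivity)
    | succ n ih =>
      have hrecn : a (Rseq S (n+1)) ≤ c₁ * (a (Rseq S n)) ^ 2 + Real.exp (-c₂ * Rseq S n) := by
        have hstep : Rseq S (n+1) = 2 * (Rseq S n + Rseq S n / (Real.log (Rseq S n)) ^ 2) := rfl
        rw [hstep]
        exact hrec (Rseq S n) (le_trans hSR₀ (hRS n))
      have hapos : 0 < a (Rseq S n) := hpos _ (hRpos n).le
      have hsq : c₁ * (a (Rseq S n)) ^ 2 ≤ c₁ * ((1 / M) * Real.exp (-(c₄ * 2 ^ n))) ^ 2 := by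
        apply mul_le_mul_of_nonneg_left _ hc₁.le
        exact pow_le_pow_left₀ hapos.le ih 2
      have hsq2 : c₁ * ((1 / M) * Real.exp (-(c₄ * 2 ^ n))) ^ 2 ≤
          (1 / (2 * M)) * Real.exp (-(c₄ * 2 ^ (n+1))) := by
        have he : Real.exp (-(c₄ * 2 ^ n)) ^ 2 = Real.exp (-(c₄ * 2 ^ (n+1))) := by
          rw [← Real.exp_nat_mul]
          congr 1
          ring
        rw [mul_pow, he]
        have hc : c₁ * (1 / M) ^ 2 ≤ 1 / (2 * M) := by
          have heq : c₁ * (1 / M) ^ 2 = c₁ / M ^ 2 := by ring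
          rw [heq, div_le_div_iff₀ (by positivity) (by positivity)]
          nlinarith
        nlinarith [Real.exp_pos (-(c₄ * 2 ^ (n+1))), hc]
      have hexp2 : Real.exp (-c₂ * Rseq S n) ≤ (1 / (2 * M)) * Real.exp (-(c₄ * 2 ^ (n+1))) := by
        have harg : -c₂ * Rseq S n ≤ -Real.log (2 * M) + -(c₄ * 2 ^ (n+1)) := by
          have h1 : c₄ * 2 ^ (n+1) ≤ (c₂ / 2) * Rseq S n := by
            have h2 : c₄ ≤ c₂ * S / 4 := hc₄a
            have h3 : S * 2 ^ n ≤ Rseq S n := Rl n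
            have : c₄ * 2 ^ (n+1) = 2 * c₄ * 2 ^ n := by ring
            rw [this]
            nlinarith [h2n n, hc₄pos]
          have h4 : Real.log (2 * M) ≤ (c₂ / 2) * Rseq S n := by
            have := hRS n
            nlinarith [hSc, hc₂]
          linarith
        calc Real.exp (-c₂ * Rseq S n) ≤ Real.exp (-Real.log (2 * M) + -(c₄ * 2 ^ (n+1))) :=
              Real.exp_le_exp.mpr harg
        _ = (1 / (2 * M)) * Real.exp (-(c₄ * 2 ^ (n+1))) := by
              rw [Real.exp_add, Real.exp_neg, Real.exp_log (by positivity), one_div]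
        _ ≤ _ := le_refl _
      calc a (Rseq S (n+1)) ≤ c₁ * (a (Rseq S n)) ^ 2 + Real.exp (-c₂ * Rseq S n) := hrecn
      _ ≤ (1 / (2 * M)) * Real.exp (-(c₄ * 2 ^ (n+1)))
          + (1 / (2 * M)) * Real.exp (-(c₄ * 2 ^ (n+1))) := by
            have := le_trans hsq hsq2
            linarith
      _ = (1 / M) * Real.exp (-(c₄ * 2 ^ (n+1))) := by field_simp; ring
  -- assemble
  refine ⟨S * Real.exp 4, by positivity, c₄ / (S * Real.exp 4), by positivity,
    fun n => Rseq S n, fun n _ => ?_⟩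
  refine ⟨hRpos n, ?_, ?_, ?_⟩
  · calc (2:ℝ) ^ n = 1 * 2 ^ n := (one_mul _).symm
    _ ≤ S * 2 ^ n := by nlinarith [h2n n]
    _ ≤ Rseq S n := Rl n
  · calc Rseq S n ≤ S * 2 ^ n * Real.exp (4 - 4 / (n + 1)) := Ru n
    _ ≤ S * 2 ^ n * Real.exp 4 := by
        apply mul_le_mul_of_nonneg_left _ (by positivity)
        apply Real.exp_le_exp.mpr
        have : (0:ℝ) ≤ 4 / ((n:ℝ) + 1) := by positivity
        linarith
    _ = S * Real.exp 4 * 2 ^ n := by ring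
  · have h1 : a (Rseq S n) ≤ (1 / M) * Real.exp (-(c₄ * 2 ^ n)) := decay n
    have h2 : (1 / M) * Real.exp (-(c₄ * 2 ^ n)) ≤ Real.exp (-(c₄ * 2 ^ n)) := by
      have hMle : 1 / M ≤ 1 := by rw [div_le_one hM0]; linarith
      nlinarith [Real.exp_pos (-(c₄ * 2 ^ n)), hMle]
    have h3 : Real.exp (-(c₄ * 2 ^ n)) ≤ Real.exp (-(c₄ / (S * Real.exp 4)) * Rseq S n) := by
      apply Real.exp_le_exp.mpr
      rw [neg_mul, neg_le_neg_iff, div_mul_eq_mul_div, div_le_iff₀ (by positivity)]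
      calc c₄ * Rseq S n ≤ c₄ * (S * Real.exp 4 * 2 ^ n) := by
            have hu : Rseq S n ≤ S * Real.exp 4 * 2 ^ n := by
              calc Rseq S n ≤ S * 2 ^ n * Real.exp (4 - 4 / (n + 1)) := Ru n
              _ ≤ S * 2 ^ n * Real.exp 4 := by
                  apply mul_le_mul_of_nonneg_left _ (by positivity)
                  apply Real.exp_le_exp.mpr
                  have : (0:ℝ) ≤ 4 / ((n:ℝ) + 1) := by positivity
                  linarith
              _ = S * Real.exp 4 * 2 ^ n := by ring
            exact mul_le_mul_of_nonneg_left hu hc₄pos.le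
      _ = c₄ * 2 ^ n * (S * Real.exp 4) := by ring
    calc a (Rseq S n) ≤ Real.exp (-(c₄ * 2 ^ n)) := le_trans h1 h2
    _ ≤ Real.exp (-(c₄ / (S * Real.exp 4)) * Rseq S n) := h3
end

section
/- Let (a_R)_{R ≥ 0} be a positive real-valued function such that a_R → 0 as R → ∞, and suppose there exist constants c₁, c₂, R₀ > 0 such that for all R ≥ R₀: a_{3R} ≤ c₁ a_R² + R^{−c₂} a_R + e^{−c₂ log²(R)}. Then there exist constants c₃, R₁ > 0 such that the sequence m_n = R₁ · 3ⁿ satisfies, for every n ≥ 1: a_{m_n} ≤ e^{−c₃ log²(m_n)}. -/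
lemma step_arith (c₁ c₂ c₃ x : ℝ) (hc₁ : 0 < c₁) (hc₂ : 0 < c₂) (hc₃ : 0 < c₃)
    (hx : 8 ≤ x) (h83 : 8 * c₃ ≤ c₂) (hx2 : 8 * (1 + Real.log 3) ≤ c₂ * x)
    (hC : 4 * max (Real.log (3 * c₁)) (Real.log 3) + 1 ≤ c₃ * x ^ 2) :
    c₁ * Real.exp (-(2 * c₃ * x ^ 2)) + Real.exp (-(c₂ * x + c₃ * x ^ 2))
      + Real.exp (-(c₂ * x ^ 2))
      ≤ Real.exp (-(c₃ * (x + Real.log 3) ^ 2)) := by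
  set l := Real.log 3 with hl
  have hl0 : 0 < l := Real.log_pos (by norm_num)
  have hl2 : l ≤ 2 := by
    have := Real.log_le_sub_one_of_pos (show (0:ℝ) < 3 by norm_num)
    linarith
  have hM : Real.log c₁ + l ≤ max (Real.log (3 * c₁)) l := by
    have h3 : Real.log (3 * c₁) = l + Real.log c₁ := by
      rw [Real.log_mul (by norm_num) hc₁.ne']
    calc Real.log c₁ + l = Real.log (3 * c₁) := by rw [h3]; ring
    _ ≤ _ := le_max_left _ _
  set M := max (Real.log (3 * c₁)) l with hMdef
  have hM0 : 0 < M := lt_of_lt_of_le hl0 (le_max_right _ _)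
  have key : ∀ t : ℝ, t ≤ -(c₃*(x+l)^2) - l →
      Real.exp t ≤ Real.exp (-(c₃ * (x + l) ^ 2)) / 3 := by
    intro t ht
    rw [show Real.exp (-(c₃ * (x + l) ^ 2)) / 3 = Real.exp (-(c₃ * (x + l) ^ 2) - l) by
      rw [Real.exp_sub, hl, Real.exp_log (by norm_num)]]
    exact Real.exp_le_exp.mpr ht
  have hcx : 0 ≤ c₃ * x := by positivity
  have hcx2 : 0 ≤ c₃ * x * (x - 8) := by
    apply mul_nonneg hcx; linarith
  have e1 : c₁ * Real.exp (-(2 * c₃ * x ^ 2)) ≤ Real.exp (-(c₃ * (x + l) ^ 2)) / 3 := by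
    rw [show c₁ * Real.exp (-(2 * c₃ * x ^ 2)) = Real.exp (Real.log c₁ + -(2*c₃*x^2)) by
      rw [Real.exp_add, Real.exp_log hc₁]]
    apply key
    nlinarith [mul_nonneg hcx (by linarith : (0:ℝ) ≤ 2 - l), mul_nonneg hc₃.le (mul_nonneg (by linarith : (0:ℝ) ≤ 2 - l) (by linarith : (0:ℝ) ≤ 2 + l))]
  have e2 : Real.exp (-(c₂ * x + c₃ * x ^ 2)) ≤ Real.exp (-(c₃ * (x + l) ^ 2)) / 3 := by
    apply key
    nlinarith [mul_nonneg hcx (by linarith : (0:ℝ) ≤ 2 - l), mul_nonneg hc₃.le (mul_nonneg (by linarith : (0:ℝ) ≤ 2 - l) (by linarith : (0:ℝ) ≤ 2 + l)), mul_pos hc₂ (by linarith : (0:ℝ) < x)]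
  have e3 : Real.exp (-(c₂ * x ^ 2)) ≤ Real.exp (-(c₃ * (x + l) ^ 2)) / 3 := by
    apply key
    nlinarith [mul_nonneg hcx (by linarith : (0:ℝ) ≤ 2 - l), mul_nonneg (mul_nonneg hc₃.le (by linarith : (0:ℝ) ≤ x)) (by linarith : (0:ℝ) ≤ 2 - l), mul_le_mul_of_nonneg_right hx2 (by linarith : (0:ℝ) ≤ x), mul_le_mul_of_nonneg_right h83 (sq_nonneg x)]
  linarith


set_option maxHeartbeats 1000000 in
/-- **Lemma 5.4.**
Let `(a_R)_{R ≥ 0}` be a positive real-valued function such that `a_R → 0` as `R → ∞`, and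
suppose there exist constants `c₁, c₂, R₀ > 0` such that for all `R ≥ R₀`:
`a_{3R} ≤ c₁ a_R² + R^{−c₂} a_R + e^{−c₂ log²(R)}`. Then there exist constants `c₃, R₁ > 0`
such that the sequence `m_n = R₁ · 3ⁿ` satisfies, for every `n ≥ 1`:
`a_{m_n} ≤ e^{−c₃ log²(m_n)}`. -/
theorem functional_inequality_quasi_exponential_decay
    (a : ℝ → ℝ) (hpos : ∀ R : ℝ, 0 ≤ R → 0 < a R)
    (hlim : Filter.Tendsto a Filter.atTop (nhds 0))
    (c₁ c₂ R₀ : ℝ) (hc₁ : 0 < c₁) (hc₂ : 0 < c₂) (hR₀ : 0 < R₀)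
    (hrec : ∀ R : ℝ, R₀ ≤ R →
      a (3 * R) ≤ c₁ * (a R) ^ 2 + R ^ (-c₂) * a R + Real.exp (-c₂ * (Real.log R) ^ 2)) :
    ∃ c₃ > (0 : ℝ), ∃ R₁ > (0 : ℝ), ∀ n : ℕ, 1 ≤ n →
      a (R₁ * 3 ^ n) ≤ Real.exp (-c₃ * (Real.log (R₁ * 3 ^ n)) ^ 2) := by
  have hl0 : (0:ℝ) < Real.log 3 := Real.log_pos (by norm_num)
  set M : ℝ := max (Real.log (3 * c₁)) (Real.log 3) with hMdef
  have hM0 : 0 < M := lt_of_lt_of_le hl0 (le_max_right _ _)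
  set C : ℝ := 4 * M + 1 with hCdef
  have hC0 : 0 < C := by rw [hCdef]; linarith
  obtain ⟨T, hT⟩ := Filter.eventually_atTop.mp
    (hlim.eventually_lt_const (Real.exp_pos (-C)))
  set K : ℝ := 8 + 8 * (1 + Real.log 3) / c₂ + Real.sqrt (8 * C / c₂) with hKdef
  set R₁ : ℝ := max (max R₀ T) (Real.exp K) with hR₁def
  have hR₁pos : 0 < R₁ := lt_of_lt_of_le (Real.exp_pos K) (le_max_right _ _)
  have hKlog : K ≤ Real.log R₁ := by
    rw [← Real.log_exp K]
    exact Real.log_le_log (Real.exp_pos K) (le_max_right _ _)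
  have hR₀R₁ : R₀ ≤ R₁ := le_trans (le_max_left _ _) (le_max_left _ _)
  have hTR₁ : T ≤ R₁ := le_trans (le_max_right _ _) (le_max_left _ _)
  set L : ℕ → ℝ := fun n => Real.log R₁ + n * Real.log 3 with hLdef
  have hLlog : ∀ n : ℕ, Real.log (R₁ * 3 ^ n) = L n := by
    intro n
    simp only [hLdef]
    rw [Real.log_mul hR₁pos.ne' (by positivity), Real.log_pow]
  have hK8 : (8:ℝ) ≤ K := by
    have h1 : 0 ≤ 8*(1+Real.log 3)/c₂ := by positivity
    have h2 : 0 ≤ Real.sqrt (8*C/c₂) := Real.sqrt_nonneg _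
    rw [hKdef]; linarith
  have hKs : Real.sqrt (8*C/c₂) ≤ K := by
    have h1 : 0 ≤ 8*(1+Real.log 3)/c₂ := by positivity
    rw [hKdef]; linarith
  have hKd : 8 * (1 + Real.log 3) / c₂ ≤ K := by
    have h2 : 0 ≤ Real.sqrt (8*C/c₂) := Real.sqrt_nonneg _
    rw [hKdef]; linarith
  clear_value M C K R₁
  have hLK : ∀ n : ℕ, 1 ≤ n → K ≤ L n := by
    intro n hn
    have h1 : (0:ℝ) ≤ (n:ℝ) * Real.log 3 := by positivity
    simp only [hLdef]
    linarith
  have hmono : ∀ n : ℕ, 1 ≤ n → L 1 ≤ L n := by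
    intro n hn
    have h1 : (1:ℝ) ≤ (n:ℝ) := by exact_mod_cast hn
    simp only [hLdef]
    push_cast
    nlinarith
  have hLsucc : ∀ n : ℕ, L (n+1) = L n + Real.log 3 := by
    intro n
    simp only [hLdef]
    push_cast
    ring
  clear_value L
  have hL1 : (8:ℝ) ≤ L 1 := le_trans hK8 (hLK 1 le_rfl)
  have hL1sq : (0:ℝ) < (L 1)^2 := by nlinarith
  set c₃ : ℝ := C / (L 1)^2 with hc₃def
  have hc₃pos : 0 < c₃ := div_pos hC0 hL1sq
  have hc₃L1 : c₃ * (L 1)^2 = C := by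
    rw [hc₃def]; field_simp
  clear_value c₃
  have hsLK : Real.sqrt (8*C/c₂) ≤ L 1 := le_trans hKs (hLK 1 le_rfl)
  have h8C : 8 * C ≤ c₂ * (L 1)^2 := by
    have hs := Real.sq_sqrt (show (0:ℝ) ≤ 8*C/c₂ by positivity)
    have h2 : 8 * C / c₂ ≤ (L 1)^2 := by
      nlinarith [Real.sqrt_nonneg (8*C/c₂)]
    rw [div_le_iff₀ hc₂] at h2
    linarith
  have h83 : 8 * c₃ ≤ c₂ := by
    nlinarith [hc₃L1, hL1sq, h8C]
  have hMC : ∀ n : ℕ, 1 ≤ n → 4 * M + 1 ≤ c₃ * (L n)^2 := by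
    intro n hn
    have h1 := hmono n hn
    have h2 : c₃ * (L 1)^2 = 4 * M + 1 := by rw [hc₃L1, hCdef]
    have h3 : (L 1)^2 ≤ (L n)^2 := by nlinarith
    nlinarith [mul_le_mul_of_nonneg_left h3 hc₃pos.le]
  have hx2' : ∀ n : ℕ, 1 ≤ n → 8 * (1 + Real.log 3) ≤ c₂ * L n := by
    intro n hn
    have h2 := le_trans hKd (hLK n hn)
    rw [div_le_iff₀ hc₂] at h2
    linarith
  have hbase : a (R₁ * 3 ^ 1) ≤ Real.exp (-c₃ * (L 1)^2) := by
    have hTR : T ≤ R₁ * 3 ^ 1 := by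
      have : R₁ * 3 ^ 1 = 3 * R₁ := by ring
      rw [this]; linarith
    have h1 := (hT _ hTR).le
    have h2 : -c₃ * (L 1)^2 = -C := by rw [← hc₃L1]; ring
    rw [h2]; exact h1
  refine ⟨c₃, hc₃pos, R₁, hR₁pos, ?_⟩
  intro n hn
  rw [hLlog n]
  induction n, hn using Nat.le_induction with
  | base => exact hbase
  | succ n hn IH =>
    have h3n : (1:ℝ) ≤ 3 ^ n := one_le_pow₀ (by norm_num)
    have hRn0 : (0:ℝ) < R₁ * 3 ^ n := by positivity
    have hRn : R₀ ≤ R₁ * 3 ^ n := by nlinarith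
    have hrecn := hrec (R₁ * 3 ^ n) hRn
    rw [show (3:ℝ) * (R₁ * 3 ^ n) = R₁ * 3 ^ (n+1) by ring, hLlog n] at hrecn
    have hb0 : 0 < a (R₁ * 3 ^ n) := hpos _ hRn0.le
    have hx8 : (8:ℝ) ≤ L n := le_trans hK8 (hLK n hn)
    have key := step_arith c₁ c₂ c₃ (L n) hc₁ hc₂ hc₃pos hx8 h83 (hx2' n hn) (by rw [← hMdef]; exact hMC n hn)
    have t1 : c₁ * (a (R₁ * 3 ^ n))^2 ≤ c₁ * Real.exp (-(2 * c₃ * (L n)^2)) := by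
      have h2 : (a (R₁ * 3 ^ n))^2 ≤ (Real.exp (-c₃ * (L n)^2))^2 :=
        pow_le_pow_left₀ hb0.le IH 2
      have h3 : (Real.exp (-c₃ * (L n)^2))^2 = Real.exp (-(2 * c₃ * (L n)^2)) := by
        rw [sq, ← Real.exp_add]; ring_nf
      nlinarith
    have hrp : (R₁ * 3 ^ n : ℝ) ^ (-c₂) = Real.exp (-(c₂ * L n)) := by
      rw [Real.rpow_def_of_pos hRn0, hLlog n]; ring_nf
    have t2 : (R₁ * 3 ^ n : ℝ) ^ (-c₂) * a (R₁ * 3 ^ n)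
        ≤ Real.exp (-(c₂ * L n + c₃ * (L n)^2)) := by
      rw [hrp]
      calc Real.exp (-(c₂ * L n)) * a (R₁ * 3 ^ n)
          ≤ Real.exp (-(c₂ * L n)) * Real.exp (-c₃ * (L n)^2) :=
            mul_le_mul_of_nonneg_left IH (Real.exp_pos _).le
      _ = Real.exp (-(c₂ * L n + c₃ * (L n)^2)) := by rw [← Real.exp_add]; ring_nf
    have t3 : Real.exp (-c₂ * (L n)^2) = Real.exp (-(c₂ * (L n)^2)) := by ring_nf
    calc a (R₁ * 3 ^ (n+1)) ≤ c₁ * (a (R₁ * 3 ^ n))^2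
          + (R₁ * 3 ^ n : ℝ) ^ (-c₂) * a (R₁ * 3 ^ n)
          + Real.exp (-c₂ * (L n)^2) := hrecn
      _ ≤ c₁ * Real.exp (-(2 * c₃ * (L n)^2)) + Real.exp (-(c₂ * L n + c₃ * (L n)^2))
          + Real.exp (-(c₂ * (L n)^2)) := by rw [t3]; linarith
      _ ≤ Real.exp (-(c₃ * (L n + Real.log 3)^2)) := key
      _ = Real.exp (-c₃ * (L (n+1))^2) := by rw [hLsucc n]; ring_nf
end

section
/- Let n ∈ ℕ, let X = (X₁, …, Xₙ) be a vector of n independent standard Gaussian random variables, and let A ⊆ ℝⁿ be a Borel set. Then the function ℓ ↦ P[(X₁ + ℓ, …, Xₙ + ℓ) ∈ A] is differentiable on ℝ and, for every ℓ ∈ ℝ: d/dℓ P[(X₁ + ℓ, …, Xₙ + ℓ) ∈ A] = Σ_{i=1}^n E[ Xᵢ · 1_{(X₁ + ℓ, …, Xₙ + ℓ) ∈ A} ]. -/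
open MeasureTheory ProbabilityTheory

noncomputable section

/-- The standard Gaussian measure on `ℝⁿ`: the law of a vector of `n` independent standard
Gaussian random variables. -/
def stdGaussian (n : ℕ) : Measure (Fin n → ℝ) :=
  Measure.pi fun _ => gaussianReal 0 1

/-!
By the Cameron–Martin formula, shifting the standard Gaussian measure by `t • v` multiplies it by
the density `exp (t ⟪v, x⟫ - t² ‖v‖² / 2)`. Hence `P[X + t • v ∈ A]` is the product of
`exp (-t² ‖v‖² / 2)` and the moment generating function of `⟪v, X⟫` under the Gaussian measure
restricted to `A`, which is smooth in `t` because `⟪v, X⟫` has exponential moments of all orders.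
Differentiating this product and undoing the change of measure turns the derivative into
`E[⟪v, X⟫ 1_A(X + t • v)]`; the theorem is the case `v = (1, …, 1)`.
-/

open Real
open scoped ENNReal

lemma Set.indicator_univ_pi_prod {ι M₀ : Type*} [Fintype ι] [CommMonoidWithZero M₀]
    {Ω : ι → Type*} (s : ∀ i, Set (Ω i)) (f : ∀ i, Ω i → M₀) (x : ∀ i, Ω i) :
    (Set.univ.pi s).indicator (fun x => ∏ i, f i (x i)) x = ∏ i, (s i).indicator (f i) (x i) := by
  classical
  simp [Set.indicator_apply, Finset.prod_ite_zero]

lemma MeasureTheory.lintegral_fintype_prod_eq_prod {ι : Type*} [Fintype ι] {Ω : ι → Type*}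
    [∀ i, MeasurableSpace (Ω i)] (μ : ∀ i, Measure (Ω i)) [∀ i, IsProbabilityMeasure (μ i)]
    {f : ∀ i, Ω i → ℝ≥0∞} (hf : ∀ i, Measurable (f i)) :
    ∫⁻ x, ∏ i, f i (x i) ∂Measure.pi μ = ∏ i, ∫⁻ y, f i y ∂μ i := by
  rw [lintegral_prod_eq_prod_lintegral_of_indepFun _ _
    (iIndepFun_pi fun i => (hf i).aemeasurable) fun i => (hf i).comp (measurable_pi_apply i)]
  exact Finset.prod_congr rfl fun i _ => (measurePreserving_eval μ i).lintegral_comp (hf i)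

lemma MeasureTheory.Measure.pi_withDensity {ι : Type*} [Fintype ι] {Ω : ι → Type*}
    [∀ i, MeasurableSpace (Ω i)] (μ : ∀ i, Measure (Ω i)) [∀ i, IsProbabilityMeasure (μ i)]
    {f : ∀ i, Ω i → ℝ≥0∞} [∀ i, SigmaFinite ((μ i).withDensity (f i))]
    (hf : ∀ i, Measurable (f i)) :
    Measure.pi (fun i => (μ i).withDensity (f i))
      = (Measure.pi μ).withDensity fun x => ∏ i, f i (x i) := by
  refine Measure.pi_eq (μ := fun i => (μ i).withDensity (f i)) fun s hs => ?_
  simp only [withDensity_apply _ (MeasurableSet.univ_pi hs), withDensity_apply _ (hs _),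
    ← lintegral_indicator (MeasurableSet.univ_pi hs), ← lintegral_indicator (hs _),
    Set.indicator_univ_pi_prod]
  exact lintegral_fintype_prod_eq_prod μ fun i => (hf i).indicator (hs i)

lemma MeasureTheory.integral_mul_indicator_one {α : Type*} [MeasurableSpace α] {μ : Measure α}
    {A : Set α} (hA : MeasurableSet A) (f : α → ℝ) :
    ∫ x, f x * A.indicator 1 x ∂μ = ∫ x in A, f x ∂μ := by
  rw [← integral_indicator hA]
  congr 1
  ext x
  by_cases hx : x ∈ A <;> simp [hx]

lemma gaussianReal_eq_withDensity (a : ℝ) :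
    gaussianReal a 1
      = (gaussianReal 0 1).withDensity fun y => ENNReal.ofReal (exp (a * y - a ^ 2 / 2)) := by
  rw [gaussianReal_of_var_ne_zero _ one_ne_zero, gaussianReal_of_var_ne_zero _ one_ne_zero,
    ← withDensity_mul _ (measurable_gaussianPDF 0 1) (by fun_prop)]
  congr 1
  ext y
  rw [Pi.mul_apply, gaussianPDF, gaussianPDF, ← ENNReal.ofReal_mul (gaussianPDFReal_nonneg 0 1 y),
    gaussianPDFReal, gaussianPDFReal, mul_assoc _ (rexp _), ← exp_add]
  congr 3
  push_cast
  ring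

lemma exp_smul_dotProduct_sub_half {ι : Type*} [Fintype ι] (t : ℝ) (v x : ι → ℝ) :
    exp ((t • v) ⬝ᵥ x - (t • v) ⬝ᵥ (t • v) / 2)
      = exp (-(t ^ 2 * v ⬝ᵥ v / 2)) * exp (t * v ⬝ᵥ x) := by
  rw [← exp_add, smul_dotProduct, dotProduct_smul, smul_dotProduct, smul_eq_mul, smul_eq_mul,
    smul_eq_mul]
  ring_nf

section StdGaussian

variable {n : ℕ}

lemma stdGaussian_map_add (a : Fin n → ℝ) :
    (stdGaussian n).map (· + a)
      = (stdGaussian n).withDensity fun x => ENNReal.ofReal (exp (a ⬝ᵥ x - a ⬝ᵥ a / 2)) := by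
  have h_shift : ∀ i, (gaussianReal 0 1).map (· + a i)
      = (gaussianReal 0 1).withDensity fun y => ENNReal.ofReal (exp (a i * y - a i ^ 2 / 2)) :=
    fun i => by rw [gaussianReal_map_add_const, zero_add, gaussianReal_eq_withDensity]
  change (Measure.pi _).map (fun x i => x i + a i) = _
  rw [Measure.pi_map_pi fun i => (measurable_add_const (a i)).aemeasurable]
  simp_rw [h_shift]
  rw [Measure.pi_withDensity _ fun i => by fun_prop]
  congr 1
  ext x
  rw [← ENNReal.ofReal_prod_of_nonneg fun i _ => (exp_pos _).le, ← exp_sum]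
  simp only [dotProduct, Finset.sum_sub_distrib, Finset.sum_div]
  ring_nf

lemma integral_stdGaussian_comp_add (a : Fin n → ℝ) {g : (Fin n → ℝ) → ℝ} (hg : Measurable g) :
    ∫ x, g (x + a) ∂stdGaussian n = ∫ x, exp (a ⬝ᵥ x - a ⬝ᵥ a / 2) * g x ∂stdGaussian n := by
  rw [← integral_map (measurable_add_const a).aemeasurable hg.aestronglyMeasurable,
    stdGaussian_map_add, integral_withDensity_eq_integral_toReal_smul (by fun_prop)
      (ae_of_all _ fun _ => ENNReal.ofReal_lt_top)]
  simp only [ENNReal.toReal_ofReal (exp_pos _).le, smul_eq_mul]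

lemma integrable_exp_dotProduct_stdGaussian (v : Fin n → ℝ) :
    Integrable (fun x => exp (v ⬝ᵥ x)) (stdGaussian n) := by
  simp only [dotProduct, exp_sum]
  exact Integrable.fintype_prod fun i => integrable_exp_mul_gaussianReal (v i)

lemma mem_interior_integrableExpSet_dotProduct_stdGaussian_restrict (A : Set (Fin n → ℝ))
    (v : Fin n → ℝ) (t : ℝ) :
    t ∈ interior (integrableExpSet (v ⬝ᵥ ·) ((stdGaussian n).restrict A)) := by
  have h_univ : integrableExpSet (v ⬝ᵥ ·) ((stdGaussian n).restrict A) = Set.univ :=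
    Set.eq_univ_of_forall fun s => by
      change Integrable (fun x => exp (s * v ⬝ᵥ x)) _
      simpa only [← smul_eq_mul, ← smul_dotProduct] using
        (integrable_exp_dotProduct_stdGaussian (s • v)).restrict
  simp [h_univ]

variable {A : Set (Fin n → ℝ)}

lemma stdGaussian_real_preimage_add_smul (hA : MeasurableSet A) (v : Fin n → ℝ) (t : ℝ) :
    (stdGaussian n).real ((· + t • v) ⁻¹' A)
      = exp (-(t ^ 2 * v ⬝ᵥ v / 2)) * mgf (v ⬝ᵥ ·) ((stdGaussian n).restrict A) t := by
  rw [← integral_indicator_one (measurable_add_const _ hA)]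
  change ∫ x, A.indicator 1 (x + t • v) ∂stdGaussian n = _
  rw [integral_stdGaussian_comp_add _ (measurable_one.indicator hA)]
  simp_rw [exp_smul_dotProduct_sub_half, mul_assoc, integral_const_mul,
    integral_mul_indicator_one hA, mgf]

lemma integral_dotProduct_mul_indicator_add_smul (hA : MeasurableSet A) (v : Fin n → ℝ) (ℓ : ℝ) :
    ∫ x, v ⬝ᵥ x * A.indicator 1 (x + ℓ • v) ∂stdGaussian n
      = exp (-(ℓ ^ 2 * v ⬝ᵥ v / 2))
          * ((stdGaussian n).restrict A)[fun x => v ⬝ᵥ x * exp (ℓ * v ⬝ᵥ x)]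
        - ℓ * v ⬝ᵥ v
          * (exp (-(ℓ ^ 2 * v ⬝ᵥ v / 2)) * mgf (v ⬝ᵥ ·) ((stdGaussian n).restrict A) ℓ) := by
  have hℓ := mem_interior_integrableExpSet_dotProduct_stdGaussian_restrict A v ℓ
  have h_exp : Integrable (fun x => exp (ℓ * v ⬝ᵥ x)) ((stdGaussian n).restrict A) :=
    (interior_subset hℓ : ℓ ∈ integrableExpSet _ _)
  have h_mul_exp := integrable_pow_mul_exp_of_mem_interior_integrableExpSet hℓ 1
  simp only [pow_one] at h_mul_exp
  set N := v ⬝ᵥ v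
  calc ∫ x, v ⬝ᵥ x * A.indicator 1 (x + ℓ • v) ∂stdGaussian n
      = ∫ x, (fun y => (v ⬝ᵥ y - ℓ * N) * A.indicator 1 y) (x + ℓ • v) ∂stdGaussian n := by
        congr 1
        ext x
        simp only [dotProduct_add, dotProduct_smul, smul_eq_mul, N]
        ring
    _ = ∫ x, exp ((ℓ • v) ⬝ᵥ x - (ℓ • v) ⬝ᵥ (ℓ • v) / 2) * ((v ⬝ᵥ x - ℓ * N) * A.indicator 1 x)
          ∂stdGaussian n :=
        integral_stdGaussian_comp_add _
          (((continuous_const.dotProduct continuous_id).measurable.sub_const _).mul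
            (measurable_one.indicator hA))
    _ = ∫ x in A, exp (-(ℓ ^ 2 * N / 2)) * (v ⬝ᵥ x * exp (ℓ * v ⬝ᵥ x) - ℓ * N * exp (ℓ * v ⬝ᵥ x))
          ∂stdGaussian n := by
        rw [← integral_mul_indicator_one hA]
        congr 1
        ext x
        rw [exp_smul_dotProduct_sub_half]
        ring
    _ = _ := by
        rw [integral_const_mul, integral_sub h_mul_exp (h_exp.const_mul _), integral_const_mul]
        simp only [mgf]
        ring

theorem hasDerivAt_stdGaussian_real_preimage_add_smul (hA : MeasurableSet A) (v : Fin n → ℝ)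
    (ℓ : ℝ) :
    HasDerivAt (fun t => (stdGaussian n).real ((· + t • v) ⁻¹' A))
      (∫ x, v ⬝ᵥ x * A.indicator 1 (x + ℓ • v) ∂stdGaussian n) ℓ := by
  have h_gauss : HasDerivAt (fun t => exp (-(t ^ 2 * v ⬝ᵥ v / 2)))
      (exp (-(ℓ ^ 2 * v ⬝ᵥ v / 2)) * -((2 : ℕ) * ℓ ^ (2 - 1) * v ⬝ᵥ v / 2)) ℓ :=
    (((hasDerivAt_pow 2 ℓ).mul_const _).div_const 2).neg.exp
  have h_mgf :=
    hasDerivAt_mgf (mem_interior_integrableExpSet_dotProduct_stdGaussian_restrict A v ℓ)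
  simp_rw [stdGaussian_real_preimage_add_smul hA, integral_dotProduct_mul_indicator_add_smul hA]
  exact (h_gauss.mul h_mgf).congr_deriv (by push_cast; ring)

end StdGaussian

/-- **Russo's formula for i.i.d. Gaussian variables (equation (5.1)).**
Let `n ∈ ℕ`, let `X = (X₁, …, Xₙ)` be a vector of `n` independent standard Gaussian random
variables, and let `A ⊆ ℝⁿ` be a Borel set. Then the function
`ℓ ↦ P[(X₁ + ℓ, …, Xₙ + ℓ) ∈ A]` is differentiable on `ℝ` and, for every `ℓ ∈ ℝ`:
`d/dℓ P[(X₁ + ℓ, …, Xₙ + ℓ) ∈ A] = Σᵢ E[Xᵢ · 1_{(X₁ + ℓ, …, Xₙ + ℓ) ∈ A}]`. -/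
theorem gaussian_russo_formula
    (n : ℕ) (A : Set (Fin n → ℝ)) (hA : MeasurableSet A) (ℓ : ℝ) :
    HasDerivAt
      (fun t : ℝ => ((stdGaussian n) {x | (fun i => x i + t) ∈ A}).toReal)
      (∑ i : Fin n,
        ∫ x, x i * Set.indicator A (fun _ => (1 : ℝ)) (fun j => x j + ℓ) ∂(stdGaussian n))
      ℓ := by
  have h_shift : ∀ (t : ℝ) (x : Fin n → ℝ), x + t • (1 : Fin n → ℝ) = fun i => x i + t :=
    fun t x => by ext; simp
  have h_int : ∀ i, Integrable (fun x => x i * A.indicator 1 (x + ℓ • 1)) (stdGaussian n) :=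
    fun i => (integrable_eval ((memLp_id_gaussianReal 1).integrable le_rfl)).mul_bdd (c := 1)
      ((measurable_one.indicator hA).comp (measurable_add_const _)).aestronglyMeasurable
      (ae_of_all _ fun x => norm_indicator_le_norm_self 1 _ |>.trans (by simp))
  have h := hasDerivAt_stdGaussian_real_preimage_add_smul hA 1 ℓ
  simp_rw [one_dotProduct, Finset.sum_mul] at h
  rw [integral_finsetSum _ fun i _ => h_int i] at h
  simp only [h_shift] at h
  exact h

end
end
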